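/- arXiv:2402.07695 — 6 statements merged into one kernel-verified Lean document; each statement's English description precedes it below -/
import Mathlib

section
/- Let M, M' ⊆ M₀ be nonempty sets and let σ ∈ S₀ satisfy σ ↝ M and σ ↷ M'. Then Θ(M, M') ≤ U(σ). -/
open Set Filter Metric
open scoped RealInnerProductSpace

noncomputable section

/-- Euclidean space `ℝ^d`. -/
abbrev Eucl (d : ℕ) : Type := EuclideanSpace ℝ (Fin d)

/-- The communication height `Θ(x, y)` between two points. -/
def commHeight {d : ℕ} (U : Eucl d → ℝ) (x y : Eucl d) : ℝ :=
  ⨅ γ : Path x y, ⨆ t : unitInterval, U (γ t)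

/-- The communication height `Θ(A, B)` between two sets, `+∞` if one is empty. -/
def commHeightSet {d : ℕ} (U : Eucl d → ℝ) (A B : Set (Eucl d)) : EReal :=
  ⨅ x ∈ A, ⨅ y ∈ B, (commHeight U x y : EReal)

/-- `M̃`: the local minima of `U` outside `M` of height at most `c = U(M)`. -/
def tildeSet {d : ℕ} (U : Eucl d → ℝ) (M : Set (Eucl d)) (c : ℝ) : Set (Eucl d) :=
  {m' | IsLocalMin U m' ∧ m' ∉ M ∧ U m' ≤ c}

/-- `Ξ(M) = Θ(M, M̃) − U(M) ∈ (0, ∞]`. -/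
def XiSet {d : ℕ} (U : Eucl d → ℝ) (M : Set (Eucl d)) (c : ℝ) : EReal :=
  commHeightSet U M (tildeSet U M c) - (c : EReal)

/-- `M` (simple, common value `c`) is bound. -/
def IsBound {d : ℕ} (U : Eucl d → ℝ) (M : Set (Eucl d)) (c : ℝ) : Prop :=
  (∃ m, M = {m}) ∨
    ∀ m ∈ M, ∀ m' ∈ M, (commHeight U m m' : EReal) < commHeightSet U M (tildeSet U M c)

/-- `A` is a connected component of `S`. -/
def IsCompOf {d : ℕ} (S A : Set (Eucl d)) : Prop :=
  ∃ x ∈ S, A = connectedComponentIn S x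

/-- The Hessian matrix of `U` at `x`. -/
def hessMat {d : ℕ} (U : Eucl d → ℝ) (x : Eucl d) : Matrix (Fin d) (Fin d) ℝ :=
  Matrix.of fun i j =>
    iteratedFDeriv ℝ 2 U x ![EuclideanSpace.single i (1 : ℝ), EuclideanSpace.single j (1 : ℝ)]

/-- `σ` is a saddle point of `U`. -/
def IsSaddle {d : ℕ} (U : Eucl d → ℝ) (σ : Eucl d) : Prop :=
  gradient U σ = 0 ∧
    ∃ hH : (hessMat U σ).IsHermitian,
      IsUnit (hessMat U σ).det ∧ ∃! i, hH.eigenvalues i < 0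

/-- `x ↷ y` : heteroclinic orbit of `ẋ = b(x)` from `x` to `y`. -/
def Hetero {d : ℕ} (b : Eucl d → Eucl d) (x y : Eucl d) : Prop :=
  ∃ φ : ℝ → Eucl d,
    (∀ t, HasDerivAt φ (b (φ t)) t) ∧
      Tendsto φ atBot (nhds x) ∧ Tendsto φ atTop (nhds y)

/-- `σ ↝ m`. -/
def ConnectsTo {d : ℕ} (U : Eucl d → ℝ) (b : Eucl d → Eucl d) (σ m : Eucl d) : Prop :=
  Hetero b σ m ∨
    ∃ (k : ℕ) (_ : 0 < k) (σs : Fin k → Eucl d) (ms : Fin (k + 1) → Eucl d),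
      (∀ i, IsSaddle U (σs i)) ∧ (∀ i, U (σs i) < U σ) ∧
        (∀ i : Fin k, IsLocalMin U (ms i.castSucc)) ∧
        ms (Fin.last k) = m ∧ Hetero b σ (ms 0) ∧
        ∀ i : Fin k, Hetero b (σs i) (ms i.castSucc) ∧ Hetero b (σs i) (ms i.succ)

/-- `σ ↝ M`. -/
def ConnectsToSet {d : ℕ} (U : Eucl d → ℝ) (b : Eucl d → Eucl d) (σ : Eucl d)
    (M : Set (Eucl d)) : Prop :=
  ∃ m ∈ M, ConnectsTo U b σ m

/-- `σ ↷ M`. -/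
def HeteroToSet {d : ℕ} (b : Eucl d → Eucl d) (σ : Eucl d) (M : Set (Eucl d)) : Prop :=
  ∃ m ∈ M, Hetero b σ m

/-- `M →_σ M'`. -/
def AdjacentVia {d : ℕ} (U : Eucl d → ℝ) (b : Eucl d → Eucl d) (M M' : Set (Eucl d))
    (c : ℝ) (σ : Eucl d) : Prop :=
  IsSaddle U σ ∧ ConnectsToSet U b σ M ∧ HeteroToSet b σ M' ∧
    (U σ : EReal) = commHeightSet U M (tildeSet U M c) ∧
    (U σ : EReal) = commHeightSet U M M'

/-- Unstable-manifold property. -/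
def UnstableManifoldProperty {d : ℕ} (U : Eucl d → ℝ) (b : Eucl d → Eucl d) : Prop :=
  ∀ σ : Eucl d, IsSaddle U σ →
    ∃ r' > (0 : ℝ), ∃ Ap Am : Set (Eucl d),
      Ap ≠ Am ∧
      IsCompOf (ball σ r' ∩ {x | U x < U σ}) Ap ∧
      IsCompOf (ball σ r' ∩ {x | U x < U σ}) Am ∧
      (∀ C, IsCompOf (ball σ r' ∩ {x | U x < U σ}) C → C = Ap ∨ C = Am) ∧
      ∃ mp mm : Eucl d, IsLocalMin U mp ∧ IsLocalMin U mm ∧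
        ∃ tp tm : ℝ, ∃ φp φm : ℝ → Eucl d,
          (∀ t, HasDerivAt φp (b (φp t)) t) ∧ (∀ t, HasDerivAt φm (b (φm t)) t) ∧
          Tendsto φp atBot (nhds σ) ∧ Tendsto φp atTop (nhds mp) ∧
          Tendsto φm atBot (nhds σ) ∧ Tendsto φm atTop (nhds mm) ∧
          φp '' Iic tp ⊆ Ap ∧ φm '' Iic tm ⊆ Am


section AuxLemmas

variable {d : ℕ} {U : Eucl d → ℝ}

instance euclPathConnected {d : ℕ} : PathConnectedSpace (Eucl d) :=
  pathConnectedSpace_iff_connectedSpace.mpr inferInstance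

instance instNonemptyPathEucl {d : ℕ} (x y : Eucl d) : Nonempty (Path x y) :=
  PathConnectedSpace.joined x y

lemma bddAbove_pathSup (hU : Continuous U) {x y : Eucl d} (γ : Path x y) :
    BddAbove (Set.range fun t : unitInterval => U (γ t)) :=
  (isCompact_range (hU.comp γ.continuous)).bddAbove

lemma commHeight_le_pathSup (hU : Continuous U) {x y : Eucl d} (γ : Path x y) :
    commHeight U x y ≤ ⨆ t : unitInterval, U (γ t) := by
  apply ciInf_le
  refine ⟨U x, ?_⟩
  rintro v ⟨γ', rfl⟩
  have h := le_ciSup (bddAbove_pathSup hU γ') 0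
  rwa [γ'.source] at h

lemma commHeight_le_symm (hU : Continuous U) (x y : Eucl d) :
    commHeight U x y ≤ commHeight U y x := by
  refine le_ciInf fun γ => ?_
  refine (commHeight_le_pathSup hU γ.symm).trans (ciSup_le fun t => ?_)
  have h := le_ciSup (bddAbove_pathSup hU γ) (unitInterval.symm t)
  simpa [Path.symm] using h

lemma commHeight_triangle (hU : Continuous U) (x y z : Eucl d) :
    commHeight U x z ≤ max (commHeight U x y) (commHeight U y z) := by
  refine le_of_forall_pos_le_add fun ε hε => ?_
  obtain ⟨γ₁, hγ₁⟩ := exists_lt_of_ciInf_lt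
    (show commHeight U x y < commHeight U x y + ε by linarith)
  obtain ⟨γ₂, hγ₂⟩ := exists_lt_of_ciInf_lt
    (show commHeight U y z < commHeight U y z + ε by linarith)
  have h3 : commHeight U x z ≤
      max (⨆ t : unitInterval, U (γ₁ t)) (⨆ t : unitInterval, U (γ₂ t)) := by
    refine (commHeight_le_pathSup hU (γ₁.trans γ₂)).trans (ciSup_le fun t => ?_)
    have ht : (γ₁.trans γ₂) t ∈ range γ₁ ∪ range γ₂ := by
      rw [← Path.trans_range]; exact mem_range_self t
    rcases ht with ⟨s, hs⟩ | ⟨s, hs⟩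
    · exact le_max_of_le_left (hs ▸ le_ciSup (bddAbove_pathSup hU γ₁) s)
    · exact le_max_of_le_right (hs ▸ le_ciSup (bddAbove_pathSup hU γ₂) s)
  calc commHeight U x z ≤ _ := h3
    _ ≤ max (commHeight U x y + ε) (commHeight U y z + ε) := max_le_max hγ₁.le hγ₂.le
    _ = max (commHeight U x y) (commHeight U y z) + ε := max_add_add_right _ _ _

lemma commHeight_self_le (hU : Continuous U) (x : Eucl d) :
    commHeight U x x ≤ U x := by
  refine (commHeight_le_pathSup hU (Path.refl x)).trans ?_
  simp [ciSup_const]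

lemma hetero_le {b ℓ : Eucl d → Eucl d} (hU : ContDiff ℝ 2 U)
    (horth : ∀ x, (inner ℝ (gradient U x) (ℓ x) : ℝ) = 0)
    (hb : ∀ x, b x = -(gradient U x + ℓ x))
    {x y : Eucl d} (h : Hetero b x y) :
    commHeight U x y ≤ U x ∧ U y ≤ U x := by
  obtain ⟨φ, hφ, hbot, htop⟩ := h
  have hUc : Continuous U := hU.continuous
  have hUdiff : Differentiable ℝ U := hU.differentiable two_ne_zero
  have hφc : Continuous φ :=
    continuous_iff_continuousAt.mpr fun t => (hφ t).continuousAt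
  have hderiv : ∀ t, HasDerivAt (fun s => U (φ s)) (-(‖gradient U (φ t)‖ ^ 2)) t := by
    intro t
    have h1 : HasGradientAt U (gradient U (φ t)) (φ t) := (hUdiff (φ t)).hasGradientAt
    have h2 := h1.hasFDerivAt.comp_hasDerivAt t (hφ t)
    refine h2.congr_deriv ?_
    rw [InnerProductSpace.toDual_apply_apply, hb, inner_neg_right, inner_add_right, horth,
      real_inner_self_eq_norm_sq]
    ring
  have hanti : Antitone fun s => U (φ s) := by
    refine antitone_of_deriv_nonpos (fun t => (hderiv t).differentiableAt) fun t => ?_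
    rw [(hderiv t).deriv]
    exact neg_nonpos_of_nonneg (sq_nonneg _)
  have hUbot : Tendsto (fun s => U (φ s)) atBot (nhds (U x)) := (hUc.tendsto x).comp hbot
  have hUtop : Tendsto (fun s => U (φ s)) atTop (nhds (U y)) := (hUc.tendsto y).comp htop
  have hle : ∀ s, U (φ s) ≤ U x := fun s =>
    ge_of_tendsto hUbot (eventually_atBot.2 ⟨s, fun t ht => hanti ht⟩)
  have hyx : U y ≤ U x := le_of_tendsto hUtop (Eventually.of_forall hle)
  refine ⟨le_of_forall_pos_le_add fun ε hε => ?_, hyx⟩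
  set V : Set (Eucl d) := {z | U z < U x + ε} with hV
  have hVopen : IsOpen V := isOpen_lt hUc continuous_const
  have hxV : x ∈ V := by simp only [hV, mem_setOf_eq]; linarith
  set T : Set (Eucl d) := insert x (insert y (range φ)) with hT
  have hTpre : IsPreconnected T := by
    refine (isPreconnected_range hφc).subset_closure ?_ ?_
    · intro z hz; exact mem_insert_of_mem _ (mem_insert_of_mem _ hz)
    · rintro z (rfl | rfl | hz)
      · exact mem_closure_of_tendsto hbot (Eventually.of_forall fun t => mem_range_self t)
      · exact mem_closure_of_tendsto htop (Eventually.of_forall fun t => mem_range_self t)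
      · exact subset_closure hz
  have hTV : T ⊆ V := by
    rintro z (rfl | rfl | ⟨s, rfl⟩)
    · exact hxV
    · simp only [hV, mem_setOf_eq]; linarith
    · have := hle s; simp only [hV, mem_setOf_eq]; linarith
  have hxT : x ∈ T := mem_insert _ _
  have hyT : y ∈ T := mem_insert_of_mem _ (mem_insert _ _)
  have hCopen : IsOpen (connectedComponentIn V x) := hVopen.connectedComponentIn
  have hCconn : IsConnected (connectedComponentIn V x) :=
    isConnected_connectedComponentIn_iff.mpr hxV
  have hCpath : IsPathConnected (connectedComponentIn V x) :=
    hCopen.isConnected_iff_isPathConnected.mp hCconn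
  have hTC : T ⊆ connectedComponentIn V x := hTpre.subset_connectedComponentIn hxT hTV
  obtain ⟨γ, hγ⟩ := hCpath.joinedIn x (hTC hxT) y (hTC hyT)
  refine (commHeight_le_pathSup hUc γ).trans (ciSup_le fun t => ?_)
  exact (connectedComponentIn_subset V x (hγ t)).le

end AuxLemmas

theorem statement1 {d : ℕ} (hd : 1 ≤ d)
    (U : Eucl d → ℝ) (hU : ContDiff ℝ 2 U)
    (ℓ : Eucl d → Eucl d) (hℓ : ContDiff ℝ 1 ℓ)
    (horth : ∀ x, (inner ℝ (gradient U x) (ℓ x) : ℝ) = 0)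
    (b : Eucl d → Eucl d) (hb : ∀ x, b x = -(gradient U x + ℓ x))
    (M M' : Set (Eucl d))
    (hMloc : ∀ m ∈ M, IsLocalMin U m) (hM'loc : ∀ m ∈ M', IsLocalMin U m)
    (hMne : M.Nonempty) (hM'ne : M'.Nonempty)
    (σ : Eucl d) (hσ : IsSaddle U σ)
    (hconn : ConnectsToSet U b σ M) (hhet : HeteroToSet b σ M') :
    commHeightSet U M M' ≤ (U σ : EReal) := by
  obtain ⟨m', hm'M, hhet'⟩ := hhet
  obtain ⟨m, hmM, hconn'⟩ := hconn
  have hUc : Continuous U := hU.continuous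
  have hσm' : commHeight U σ m' ≤ U σ := (hetero_le hU horth hb hhet').1
  suffices h : commHeight U m m' ≤ U σ by
    refine le_trans ?_ (EReal.coe_le_coe_iff.2 h)
    refine le_trans (iInf₂_le m hmM) ?_
    exact iInf₂_le m' hm'M
  rcases hconn' with hhetm | ⟨k, hk, σs, ms, hsad, hltσ, hminloc, hlast, hσm0, hchain⟩
  · have h1 : commHeight U m σ ≤ U σ :=
      (commHeight_le_symm hUc m σ).trans (hetero_le hU horth hb hhetm).1
    exact (commHeight_triangle hUc m σ m').trans (max_le h1 hσm')
  · have hσm0' : commHeight U σ (ms 0) ≤ U σ := (hetero_le hU horth hb hσm0).1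
    have hind : ∀ i : Fin (k + 1), commHeight U (ms 0) (ms i) ≤ U σ := by
      intro i
      induction i using Fin.induction with
      | zero =>
        exact (commHeight_self_le hUc (ms 0)).trans (hetero_le hU horth hb hσm0).2
      | succ i ih =>
        have hca := (hchain i).1
        have hcb := (hchain i).2
        have h1 : commHeight U (ms i.castSucc) (ms i.succ) ≤ U (σs i) := by
          refine (commHeight_triangle hUc _ (σs i) _).trans (max_le ?_ ?_)
          · exact (commHeight_le_symm hUc _ _).trans (hetero_le hU horth hb hca).1
          · exact (hetero_le hU horth hb hcb).1
        refine (commHeight_triangle hUc (ms 0) (ms i.castSucc) (ms i.succ)).trans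
          (max_le ih (h1.trans (hltσ i).le))
    have hm0m : commHeight U (ms 0) m ≤ U σ := by
      have := hind (Fin.last k); rwa [hlast] at this
    have h2 : commHeight U (ms 0) m' ≤ U σ := by
      refine (commHeight_triangle hUc (ms 0) σ m').trans (max_le ?_ hσm')
      exact (commHeight_le_symm hUc _ _).trans hσm0'
    refine (commHeight_triangle hUc m (ms 0) m').trans (max_le ?_ h2)
    exact (commHeight_le_symm hUc _ _).trans hm0m


end
end

section
/- Let M₁, M₂ ⊆ M₀ be disjoint, finite, nonempty, simple and bound sets with U(M₁) ≤ U(M₂) and Ξ(M₁) < Ξ(M₂) (inequality in (0, +∞]). Then Θ(M₁, M̃₁) < Θ(M₁, M₂); in particular there is no point σ with U(σ) = Θ(M₁, M̃₁) = Θ(M₁, M₂), so M₂ is not adjacent to M₁. -/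
open Set Filter Metric
open scoped RealInnerProductSpace

noncomputable section

lemma commHeight_symm {d : ℕ} (U : Eucl d → ℝ) (x y : Eucl d) :
    commHeight U x y = commHeight U y x := by
  have key : ∀ (a b : Eucl d) (γ : Path a b),
      (⨆ t : unitInterval, U (γ.symm t)) = ⨆ t : unitInterval, U (γ t) := by
    intro a b γ
    rw [iSup, iSup]
    congr 1
    have hsurj : Function.Surjective (unitInterval.symm : unitInterval → unitInterval) :=
      unitInterval.symm_involutive.surjective
    have h : (fun t : unitInterval => U (γ.symm t)) =
        (fun t : unitInterval => U (γ t)) ∘ unitInterval.symm := rfl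
    rw [h, Set.range_comp, hsurj.range_eq, Set.image_univ]
  unfold commHeight
  rw [iInf, iInf]
  congr 1
  have hsurj : Function.Surjective (Path.symm : Path y x → Path x y) :=
    fun γ => ⟨γ.symm, γ.symm_symm⟩
  have h : (fun γ : Path y x => ⨆ t : unitInterval, U (γ t)) =
      (fun γ : Path x y => ⨆ t : unitInterval, U (γ t)) ∘ Path.symm := by
    funext γ
    exact (key y x γ).symm
  rw [h, Set.range_comp, hsurj.range_eq, Set.image_univ]

lemma commHeightSet_symm {d : ℕ} (U : Eucl d → ℝ) (A B : Set (Eucl d)) :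
    commHeightSet U A B = commHeightSet U B A := by
  unfold commHeightSet
  refine le_antisymm ?_ ?_ <;>
  · refine le_iInf₂ fun b hb => le_iInf₂ fun a ha => ?_
    refine iInf₂_le_of_le a ha (le_trans (iInf₂_le b hb) ?_)
    rw [commHeight_symm]

lemma commHeightSet_anti {d : ℕ} (U : Eucl d → ℝ) {A B B' : Set (Eucl d)} (h : B ⊆ B') :
    commHeightSet U A B' ≤ commHeightSet U A B := by
  unfold commHeightSet
  exact iInf_mono fun a => iInf_mono fun _ => iInf_le_iInf_of_subset h

theorem statement4 {d : ℕ} (hd : 1 ≤ d)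
    (U : Eucl d → ℝ) (hUc : Continuous U)
    (M₁ M₂ : Set (Eucl d)) (hdisj : Disjoint M₁ M₂)
    (h₁fin : M₁.Finite) (h₂fin : M₂.Finite)
    (h₁ne : M₁.Nonempty) (h₂ne : M₂.Nonempty)
    (h₁loc : ∀ m ∈ M₁, IsLocalMin U m) (h₂loc : ∀ m ∈ M₂, IsLocalMin U m)
    (c₁ c₂ : ℝ) (hc₁ : ∀ m ∈ M₁, U m = c₁) (hc₂ : ∀ m ∈ M₂, U m = c₂)
    (h₁bd : IsBound U M₁ c₁) (h₂bd : IsBound U M₂ c₂)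
    (hcle : c₁ ≤ c₂) (hXi : XiSet U M₁ c₁ < XiSet U M₂ c₂) :
    commHeightSet U M₁ (tildeSet U M₁ c₁) < commHeightSet U M₁ M₂ ∧
      ¬∃ σ : Eucl d, (U σ : EReal) = commHeightSet U M₁ (tildeSet U M₁ c₁) ∧
        commHeightSet U M₁ (tildeSet U M₁ c₁) = commHeightSet U M₁ M₂  := by
  have hM1sub : M₁ ⊆ tildeSet U M₂ c₂ := by
    intro m hm
    exact ⟨h₁loc m hm, fun hm2 => (hdisj.ne_of_mem hm hm2) rfl,
      (hc₁ m hm) ▸ hcle⟩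
  have h2le : commHeightSet U M₂ (tildeSet U M₂ c₂) ≤ commHeightSet U M₁ M₂ := by
    rw [commHeightSet_symm U M₁ M₂]
    exact commHeightSet_anti U hM1sub
  have hmain : commHeightSet U M₁ (tildeSet U M₁ c₁) < commHeightSet U M₁ M₂ := by
    by_contra hcon
    push_neg at hcon
    have h1 : XiSet U M₂ c₂ ≤ commHeightSet U M₁ M₂ - (c₂ : EReal) :=
      EReal.sub_le_sub h2le le_rfl
    have h2 : commHeightSet U M₁ M₂ - (c₂ : EReal) ≤
        commHeightSet U M₁ (tildeSet U M₁ c₁) - (c₁ : EReal) :=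
      EReal.sub_le_sub hcon (by exact_mod_cast hcle)
    exact absurd (hXi.trans_le (h1.trans h2)) (lt_irrefl _)
  refine ⟨hmain, ?_⟩
  rintro ⟨σ, -, heq⟩
  exact absurd (heq ▸ hmain) (lt_irrefl _)


end
end

section
/- Let M ⊆ M₀ be a finite, nonempty, simple and bound set, and let H ∈ ℝ satisfy Θ(m, m') < H for all m, m' ∈ M (including m = m', so in particular U(M) < H). Then there exists a connected component W of {x ∈ ℝ^d : U(x) < H} with M ⊆ W. If moreover H ≤ Θ(M, M̃), then every m₂ ∈ M₀ ∩ W with U(m₂) ≤ U(M) belongs to M; that is, M is exactly the set of local minima of U in W at minimal height. -/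
open Set Filter Metric
open scoped RealInnerProductSpace

noncomputable section

lemma commHeight_bddBelow {d : ℕ} (U : Eucl d → ℝ) (hUc : Continuous U) (x y : Eucl d) :
    BddBelow (Set.range fun γ : Path x y => ⨆ t : unitInterval, U (γ t)) := by
  refine ⟨U x, ?_⟩
  rintro _ ⟨γ, rfl⟩
  have hbdd : BddAbove (Set.range fun t : unitInterval => U (γ t)) :=
    (isCompact_range ((hUc.comp γ.continuous))).bddAbove
  have := le_ciSup hbdd (0 : unitInterval)
  simpa using this

lemma le_commHeight {d : ℕ} (U : Eucl d → ℝ) (hUc : Continuous U) (x y : Eucl d) :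
    U x ≤ commHeight U x y := by
  haveI : Nonempty (Path x y) := ⟨(PathConnectedSpace.joined x y).somePath⟩
  refine le_ciInf fun γ => ?_
  have hbdd : BddAbove (Set.range fun t : unitInterval => U (γ t)) :=
    (isCompact_range ((hUc.comp γ.continuous))).bddAbove
  have := le_ciSup hbdd (0 : unitInterval)
  simpa using this

theorem statement9 {d : ℕ} (hd : 1 ≤ d)
    (U : Eucl d → ℝ) (hUc : Continuous U)
    (M : Set (Eucl d)) (hMfin : M.Finite) (hMne : M.Nonempty)
    (hMloc : ∀ m ∈ M, IsLocalMin U m)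
    (c : ℝ) (hc : ∀ m ∈ M, U m = c) (hMbd : IsBound U M c)
    (H : ℝ) (hH : ∀ m ∈ M, ∀ m' ∈ M, commHeight U m m' < H) :
    ∃ W : Set (Eucl d), IsCompOf {x | U x < H} W ∧ M ⊆ W ∧
      ((H : EReal) ≤ commHeightSet U M (tildeSet U M c) →
        ∀ m₂, IsLocalMin U m₂ → m₂ ∈ W → U m₂ ≤ c → m₂ ∈ M) := by
  obtain ⟨m₀, hm₀⟩ := hMne
  have hopen : IsOpen {x : Eucl d | U x < H} := isOpen_lt hUc continuous_const
  have hm₀S : m₀ ∈ {x : Eucl d | U x < H} :=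
    lt_of_le_of_lt (le_commHeight U hUc m₀ m₀) (hH m₀ hm₀ m₀ hm₀)
  refine ⟨connectedComponentIn {x | U x < H} m₀, ⟨m₀, hm₀S, rfl⟩, ?_, ?_⟩
  · intro m hm
    haveI : Nonempty (Path m₀ m) := ⟨(PathConnectedSpace.joined m₀ m).somePath⟩
    have hlt : commHeight U m₀ m < H := hH m₀ hm₀ m hm
    obtain ⟨γ, hγ⟩ := exists_lt_of_ciInf_lt hlt
    have hbdd : BddAbove (Set.range fun t : unitInterval => U (γ t)) :=
      (isCompact_range ((hUc.comp γ.continuous))).bddAbove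
    have hsub : Set.range γ ⊆ {x : Eucl d | U x < H} := by
      rintro _ ⟨t, rfl⟩
      exact lt_of_le_of_lt (le_ciSup hbdd t) hγ
    have hconn : IsPreconnected (Set.range γ) :=
      (isConnected_range γ.continuous).isPreconnected
    have hmem : m₀ ∈ Set.range γ := ⟨0, γ.source⟩
    have := hconn.subset_connectedComponentIn hmem hsub
    exact this ⟨1, γ.target⟩
  · intro hHle m₂ hm₂loc hm₂W hm₂c
    by_contra hm₂M
    have htil : m₂ ∈ tildeSet U M c := ⟨hm₂loc, hm₂M, hm₂c⟩
    have hm₂S : m₂ ∈ {x : Eucl d | U x < H} := connectedComponentIn_subset _ _ hm₂W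
    -- joined in the open set
    haveI := hopen.locPathConnectedSpace
    have hjoined : JoinedIn {x : Eucl d | U x < H} m₀ m₂ := by
      rw [connectedComponentIn_eq_image hm₀S] at hm₂W
      obtain ⟨p, hp, hpv⟩ := hm₂W
      rw [← pathComponent_eq_connectedComponent] at hp
      rw [joinedIn_iff_joined hm₀S hm₂S]
      have hp' : Joined (⟨m₀, hm₀S⟩ : {x : Eucl d | U x < H}) p := hp
      have : p = (⟨m₂, hm₂S⟩ : {x : Eucl d | U x < H}) := Subtype.ext hpv
      exact this ▸ hp' 
    obtain ⟨γ, hγ⟩ := hjoined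
    -- the sup along γ is attained and < H
    obtain ⟨t₀, -, ht₀⟩ := IsCompact.exists_isMaxOn isCompact_univ
      (Set.univ_nonempty) ((hUc.comp γ.continuous).continuousOn)
    have hsup : (⨆ t : unitInterval, U (γ t)) < H := by
      refine lt_of_le_of_lt (ciSup_le fun t => ht₀ (Set.mem_univ t)) ?_
      exact hγ t₀
    have hch : commHeight U m₀ m₂ < H :=
      lt_of_le_of_lt (ciInf_le (commHeight_bddBelow U hUc m₀ m₂) γ) hsup
    have hle1 : commHeightSet U M (tildeSet U M c) ≤ (commHeight U m₀ m₂ : EReal) := by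
      refine le_trans (iInf₂_le m₀ hm₀) ?_
      exact iInf₂_le m₂ htil
    have : commHeightSet U M (tildeSet U M c) < (H : EReal) :=
      lt_of_le_of_lt hle1 (by exact_mod_cast hch)
    exact absurd hHle (not_le.mpr this)

end
end

section
/- Let h ∈ ℝ and r > 0, and suppose that no critical point c of U satisfies U(c) ∈ [h, h + r). Let V be a connected component of {x : U(x) < h} and let V' be the connected component of {x : U(x) < h + r} containing V. Then M₀ ∩ V = M₀ ∩ V', i.e. V and V' contain exactly the same local minima of U. -/
open Set Filter Metric
open scoped RealInnerProductSpace

noncomputable section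

/-!
A local minimum `m ∈ V'` is a critical point, so `U m < h`. Join `x₀` to `m` by a path `γ` in
`{U < h + r}` and let `M < h + r` be the maximum of `U` on it. The sublevel set `{U ≤ M}` is
compact, and since there are finitely many critical values, none lies in a strip `[a, M]` with
`a < h`; so `‖∇U‖ ≥ ε > 0` there. For a small uniform step `s`, the map `x ↦ x - s ∇U x` then
lowers `U` by a fixed amount on `{h ≤ U ≤ M}` and never leaves `{U < h}` along the segment from
a point of `{U < h}`. Finitely many iterates push the whole of `γ` into `{U < h}`, and the orbits
of the endpoints join `x₀` and `m` to its image there, so `m ∈ V`.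
-/

open scoped Gradient Topology

section Topology

variable {X : Type*} [TopologicalSpace X]

theorem joinedIn_iterate {W : Set X} {F : X → X} (hstep : ∀ x ∈ W, JoinedIn W x (F x))
    {x : X} (hx : x ∈ W) (n : ℕ) : JoinedIn W x (F^[n] x) := by
  induction n with
  | zero => exact JoinedIn.refl hx
  | succ n ih =>
    rw [Function.iterate_succ_apply']
    exact ih.trans (hstep _ ih.target_mem)

theorem JoinedIn.of_path_of_mapsTo_iterate {W K : Set X} {F : X → X} (hF : Continuous F)
    (hstep : ∀ x ∈ W, JoinedIn W x (F x)) {N : ℕ} (hN : MapsTo F^[N] K W)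
    {x y : X} (γ : Path x y) (hγ : ∀ t, γ t ∈ K) (hx : x ∈ W) (hy : y ∈ W) :
    JoinedIn W x y :=
  ((joinedIn_iterate hstep hx N).trans ⟨γ.map (hF.iterate N), fun t => hN (hγ t)⟩).trans
    (joinedIn_iterate hstep hy N).symm

theorem JoinedIn.mem_connectedComponentIn {F : Set X} {x y : X} (h : JoinedIn F x y) :
    y ∈ connectedComponentIn F x := by
  obtain ⟨γ, hγ⟩ := h
  exact (isConnected_range γ.continuous).isPreconnected.subset_connectedComponentIn
    ⟨0, γ.source⟩ (range_subset_iff.2 hγ) ⟨1, γ.target⟩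

theorem IsOpen.joinedIn_of_mem_connectedComponentIn [LocallyPathConnectedSpace X] {F : Set X}
    (hF : IsOpen F) {x y : X} (hy : y ∈ connectedComponentIn F x) : JoinedIn F x y := by
  have hx : x ∈ F := connectedComponentIn_nonempty_iff.1 ⟨y, hy⟩
  have hpath : IsPathConnected (connectedComponentIn F x) :=
    hF.connectedComponentIn.isConnected_iff_isPathConnected.1
      (isConnected_connectedComponentIn_iff.2 hx)
  exact (hpath.joinedIn x (mem_connectedComponentIn hx) y hy).mono
    (connectedComponentIn_subset F x)

theorem isCompact_setOf_le_of_tendsto_cocompact {α : Type*} [LinearOrder α] [NoMaxOrder α]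
    [TopologicalSpace α] [OrderClosedTopology α] {f : X → α} (hf : Continuous f)
    (htend : Tendsto f (cocompact X) atTop) (M : α) : IsCompact {x | f x ≤ M} := by
  obtain ⟨K, hK, hsub⟩ := mem_cocompact'.1 (htend.eventually_gt_atTop M)
  exact hK.of_isClosed_subset (isClosed_le hf continuous_const) fun x hx => hsub (not_lt.2 hx)

end Topology

theorem Set.Finite.exists_lt_forall_lt_of_lt {α : Type*} [LinearOrder α] [TopologicalSpace α]
    [OrderTopology α] [DenselyOrdered α] [NoMinOrder α] {s : Set α} (hs : s.Finite) (h : α) :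
    ∃ a < h, ∀ v ∈ s, v < h → v < a := by
  have hev : ∀ᶠ a in 𝓝[<] h, ∀ v ∈ s ∩ Iio h, v < a :=
    (hs.inter_of_left _).eventually_all.2 fun v hv =>
      eventually_nhdsWithin_of_eventually_nhds (eventually_gt_nhds hv.2)
  obtain ⟨a, ha, hah⟩ := (hev.and self_mem_nhdsWithin).exists
  exact ⟨a, hah, fun v hv hvh => ha v ⟨hv, hvh⟩⟩

theorem exists_iterate_lt_of_le_sub {X : Type*} {φ : X → ℝ} {F : X → X} {c M β : ℝ}
    (hβ : 0 < β) (hcM : c ≤ M) (hdec : ∀ x, φ x ≤ M → c ≤ φ x → φ (F x) ≤ φ x - β)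
    (hstay : ∀ x, φ x ≤ M → φ x < c → φ (F x) < c) :
    ∃ N : ℕ, ∀ x, φ x ≤ M → φ (F^[N] x) < c := by
  have key : ∀ n : ℕ, ∀ x, φ x ≤ M → φ (F^[n] x) < c ∨ φ (F^[n] x) ≤ φ x - n * β := by
    intro n
    induction n with
    | zero => simp
    | succ n ih =>
      intro x hx
      rw [Function.iterate_succ_apply']
      have hnβ : 0 ≤ (n : ℝ) * β := by positivity
      rcases ih x hx with hlt | hle
      · exact Or.inl (hstay _ (by linarith) hlt)
      rcases lt_or_ge (φ (F^[n] x)) c with hlt | hge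
      · exact Or.inl (hstay _ (by linarith) hlt)
      · have := hdec _ (by linarith) hge
        right
        push_cast
        linarith
  obtain ⟨N, hN⟩ := exists_nat_gt ((M - c) / β)
  rw [div_lt_iff₀ hβ] at hN
  exact ⟨N, fun x hx => (key N x hx).elim id fun hle => by linarith⟩

theorem exists_mem_Icc_eq_sub_smul_of_mem_segment {E : Type*} [AddCommGroup E] [Module ℝ E]
    {x v p : E} {s : ℝ} (hs : 0 ≤ s) (hp : p ∈ segment ℝ x (x - s • v)) :
    ∃ t ∈ Icc 0 s, p = x - t • v := by
  rw [segment_eq_image'] at hp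
  obtain ⟨θ, hθ, rfl⟩ := hp
  refine ⟨θ * s, ⟨by nlinarith [hθ.1], by nlinarith [hθ.2]⟩, ?_⟩
  show x + θ • (x - s • v - x) = x - (θ * s) • v
  rw [sub_sub_cancel_left, smul_neg, smul_smul, ← sub_eq_add_neg]

section Descent

variable {E : Type*} [NormedAddCommGroup E] [InnerProductSpace ℝ E] [CompleteSpace E]
  {U : E → ℝ}

theorem ContDiff.continuous_gradient (hU : ContDiff ℝ 1 U) : Continuous (∇ U) :=
  (InnerProductSpace.toDual ℝ E).symm.continuous.comp (hU.continuous_fderiv one_ne_zero)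

theorem norm_gradient_eq_norm_fderiv (x : E) : ‖∇ U x‖ = ‖fderiv ℝ U x‖ :=
  (InnerProductSpace.toDual ℝ E).symm.norm_map _

theorem gradient_step_le_of_norm_fderiv_sub_le (hU : Differentiable ℝ U) {x : E} {t μ : ℝ}
    (ht : 0 ≤ t)
    (hnear : ∀ t' ∈ Icc 0 t, ‖fderiv ℝ U (x - t' • ∇ U x) - fderiv ℝ U x‖ ≤ μ) :
    U (x - t • ∇ U x) ≤ U x - t * (‖∇ U x‖ ^ 2 - μ * ‖∇ U x‖) := by
  have hmvt := (convex_segment x (x - t • ∇ U x)).norm_image_sub_le_of_norm_fderiv_le'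
    (fun p _ => hU p) (fun p hp => by
      obtain ⟨t', ht', rfl⟩ := exists_mem_Icc_eq_sub_smul_of_mem_segment ht hp
      exact hnear t' ht')
    (left_mem_segment ℝ _ _) (right_mem_segment ℝ _ _)
  have hlin : fderiv ℝ U x (x - t • ∇ U x - x) = -(t * ‖∇ U x‖ ^ 2) := by
    rw [sub_sub_cancel_left, map_neg, map_smul, smul_eq_mul, gradient,
      ← InnerProductSpace.toDual_symm_apply, real_inner_self_eq_norm_sq]
  rw [hlin, sub_sub_cancel_left, norm_neg, norm_smul, Real.norm_of_nonneg ht] at hmvt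
  linarith [(abs_le.1 ((Real.norm_eq_abs _).symm ▸ hmvt)).2]

theorem IsCompact.exists_gradient_step_le {K : Set E} (hK : IsCompact K)
    (hU : ContDiff ℝ 1 U) {μ : ℝ} (hμ : 0 < μ) :
    ∃ s > 0, ∀ x ∈ K, ∀ t ∈ Icc 0 s,
      U (x - t • ∇ U x) ≤ U x - t * (‖∇ U x‖ ^ 2 - μ * ‖∇ U x‖) := by
  have hcont := hU.continuous_fderiv one_ne_zero
  obtain ⟨δ, hδ, hclose⟩ := Metric.mem_uniformity_dist.1
    (hK.uniformContinuousAt_of_continuousAt _ (fun x _ => hcont.continuousAt)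
      (Metric.dist_mem_uniformity hμ))
  obtain ⟨B, hB, hbound⟩ :=
    (hK.image_of_continuousOn hcont.continuousOn).isBounded.exists_pos_norm_le
  refine ⟨δ / (2 * B), by positivity, fun x hx t ht =>
    gradient_step_le_of_norm_fderiv_sub_le (hU.differentiable one_ne_zero) ht.1 fun t' ht' => ?_⟩
  have hgrad : ‖∇ U x‖ ≤ B := (norm_gradient_eq_norm_fderiv x).trans_le (hbound _ ⟨x, hx, rfl⟩)
  have hdist : dist x (x - t' • ∇ U x) < δ := by
    rw [dist_eq_norm, sub_sub_cancel, norm_smul, Real.norm_of_nonneg ht'.1]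
    calc t' * ‖∇ U x‖ ≤ δ / (2 * B) * B := by gcongr; exacts [ht'.2.trans ht.2]
      _ < δ := by field_simp; linarith
  rw [← dist_eq_norm, dist_comm]
  exact (hclose hdist hx).le

theorem exists_gradient_step_of_no_critical_strip (hU : ContDiff ℝ 1 U) {a c M : ℝ} (hac : a < c)
    (hK : IsCompact {x | U x ≤ M}) (hcrit : ∀ x, a ≤ U x → U x ≤ M → ∇ U x ≠ 0) :
    ∃ s > (0 : ℝ), ∃ β > (0 : ℝ),
      (∀ x, U x ≤ M → U x < c → ∀ t ∈ Icc 0 s, U (x - t • ∇ U x) < c) ∧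
      (∀ x, U x ≤ M → c ≤ U x → U (x - s • ∇ U x) ≤ U x - β) := by
  have hstrip : IsCompact {x | a ≤ U x ∧ U x ≤ M} :=
    hK.of_isClosed_subset ((isClosed_le continuous_const hU.continuous).inter
      (isClosed_le hU.continuous continuous_const)) fun x hx => hx.2
  obtain ⟨ε, hε, hεle⟩ := hstrip.exists_forall_le' hU.continuous_gradient.norm.continuousOn
    fun x hx => norm_pos_iff.2 (hcrit x hx.1 hx.2)
  obtain ⟨s₀, hs₀, hest⟩ := hK.exists_gradient_step_le hU (half_pos hε)
  set s := min s₀ ((c - a) / (ε / 2) ^ 2)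
  have hs : 0 < s := lt_min hs₀ (div_pos (by linarith) (by positivity))
  have hsε : s * (ε / 2) ^ 2 ≤ c - a := (le_div_iff₀ (by positivity)).1 (min_le_right _ _)
  refine ⟨s, hs, s * ε ^ 2 / 2, by positivity, fun x hxM hxc t ht => ?_, fun x hxM hcx => ?_⟩
  · have hx := hest x hxM t ⟨ht.1, ht.2.trans (min_le_left _ _)⟩
    rcases lt_or_ge (U x) a with hxa | hax
    · -- below the strip a step raises `U` by at most `t (ε / 2) ^ 2 / 4 ≤ (c - a) / 4`
      nlinarith [sq_nonneg (‖∇ U x‖ - ε / 4), ht.1, ht.2]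
    · have hgrad := hεle x ⟨hax, hxM⟩
      have : 0 ≤ t * (‖∇ U x‖ ^ 2 - ε / 2 * ‖∇ U x‖) := mul_nonneg ht.1 (by nlinarith)
      linarith
  · have hx := hest x hxM s ⟨hs.le, min_le_left _ _⟩
    have hgrad := hεle x ⟨hac.le.trans hcx, hxM⟩
    have : ε ^ 2 / 2 ≤ ‖∇ U x‖ ^ 2 - ε / 2 * ‖∇ U x‖ := by nlinarith
    nlinarith

theorem joinedIn_setOf_lt_of_path (hU : ContDiff ℝ 1 U) {a c M : ℝ} (hac : a < c)
    (hK : IsCompact {x | U x ≤ M}) (hcrit : ∀ x, a ≤ U x → U x ≤ M → ∇ U x ≠ 0)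
    {x y : E} (γ : Path x y) (hγ : ∀ t, U (γ t) ≤ M) (hx : U x < c) (hy : U y < c) :
    JoinedIn {z | U z < c} x y := by
  rcases lt_or_ge M c with hMc | hcM
  · exact ⟨γ, fun t => (hγ t).trans_lt hMc⟩
  obtain ⟨s, hs, β, hβ, hstay, hdec⟩ := exists_gradient_step_of_no_critical_strip hU hac hK hcrit
  have hstep : ∀ z ∈ {z | U z < c}, JoinedIn {z | U z < c} z (z - s • ∇ U z) :=
    fun z hz => JoinedIn.of_segment_subset fun p hp => by
      obtain ⟨t, ht, rfl⟩ := exists_mem_Icc_eq_sub_smul_of_mem_segment hs.le hp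
      exact hstay z ((hz.trans_le hcM).le) hz t ht
  obtain ⟨N, hN⟩ := exists_iterate_lt_of_le_sub hβ hcM hdec fun z hzM hz =>
    hstay z hzM hz s ⟨hs.le, le_rfl⟩
  exact JoinedIn.of_path_of_mapsTo_iterate (continuous_id.sub
    (hU.continuous_gradient.const_smul s)) hstep (K := {z | U z ≤ M}) hN γ hγ hx hy

end Descent

theorem statement10_general {d : ℕ}
    (U : Eucl d → ℝ) (hU : ContDiff ℝ (⊤ : ℕ∞) U)
    (hcoer : Tendsto U (cocompact (Eucl d)) atTop)
    (hcritfin : {x : Eucl d | gradient U x = 0}.Finite)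
    (h r : ℝ) (hr : 0 < r)
    (hnocrit : ∀ x : Eucl d, gradient U x = 0 → U x ∉ Ico h (h + r))
    (x₀ : Eucl d) (hx₀ : U x₀ < h)
    (V V' : Set (Eucl d))
    (hV : V = connectedComponentIn {x | U x < h} x₀)
    (hV' : V' = connectedComponentIn {x | U x < h + r} x₀) :
    {m | IsLocalMin U m} ∩ V = {m | IsLocalMin U m} ∩ V' := by
  have hU1 : ContDiff ℝ 1 U := hU.of_le (by exact_mod_cast le_top)
  subst hV hV'
  refine Subset.antisymm (inter_subset_inter_right _ (connectedComponentIn_mono x₀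
    fun x hx => lt_add_of_lt_of_pos hx hr)) fun m ⟨hm, hmV'⟩ => ⟨hm, ?_⟩
  have hcrit_lt : ∀ x, gradient U x = 0 → U x < h + r → U x < h := fun x hx hxr =>
    not_le.1 fun hhx => hnocrit x hx ⟨hhx, hxr⟩
  have hm_lt : U m < h := hcrit_lt m (by simp [gradient, hm.fderiv_eq_zero])
    (connectedComponentIn_subset {x | U x < h + r} x₀ hmV')
  obtain ⟨γ, hγ⟩ :=
    (isOpen_lt hU.continuous continuous_const).joinedIn_of_mem_connectedComponentIn hmV'
  obtain ⟨t₀, -, ht₀⟩ := isCompact_univ.exists_isMaxOn univ_nonempty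
    (hU.continuous.comp γ.continuous).continuousOn
  obtain ⟨a, ha, hcrit_a⟩ := (hcritfin.image U).exists_lt_forall_lt_of_lt h
  refine JoinedIn.mem_connectedComponentIn (joinedIn_setOf_lt_of_path hU1 ha
    (isCompact_setOf_le_of_tendsto_cocompact hU.continuous hcoer _) (fun x hax hxM hx => ?_)
    γ (fun t => ht₀ (mem_univ t)) hx₀ hm_lt)
  exact not_lt_of_ge hax (hcrit_a _ ⟨x, hx, rfl⟩ (hcrit_lt x hx (hxM.trans_lt (hγ t₀))))

theorem statement10 {d : ℕ} (hd : 1 ≤ d)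
    (U : Eucl d → ℝ) (hU : ContDiff ℝ (⊤ : ℕ∞) U)
    (hcoer : Tendsto U (cocompact (Eucl d)) atTop)
    (hcritfin : {x : Eucl d | gradient U x = 0}.Finite)
    (hmorse : ∀ x : Eucl d, gradient U x = 0 → IsUnit (hessMat U x).det)
    (h r : ℝ) (hr : 0 < r)
    (hnocrit : ∀ x : Eucl d, gradient U x = 0 → U x ∉ Ico h (h + r))
    (x₀ : Eucl d) (hx₀ : U x₀ < h)
    (V V' : Set (Eucl d))
    (hV : V = connectedComponentIn {x | U x < h} x₀)
    (hV' : V' = connectedComponentIn {x | U x < h + r} x₀) :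
    {m | IsLocalMin U m} ∩ V = {m | IsLocalMin U m} ∩ V' :=
  statement10_general U hU hcoer hcritfin h r hr hnocrit x₀ hx₀ V V' hV hV'

end
end

section
/- Let H ∈ ℝ and let K be a connected component of {x : U(x) ≤ H} which is not a singleton. Then K equals the union of the closures of the connected components of {x : U(x) < H} that intersect K, and every local minimum of U lying in K lies in one of these components: M₀ ∩ K = M₀ ∩ ⋃ {W : W is a connected component of {U < H} with W ∩ K ≠ ∅}. -/
open Set Filter Metric
open scoped RealInnerProductSpace

noncomputable section

/-!
If `U ≥ H` near a point `x` of `{U ≤ H}`, every point of `{U ≤ H}` near `x` is a local minimum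
of `U`. Local minima are critical, hence finitely many, so `x` is isolated in `{U ≤ H}` and its
component is `{x}`. Thus every point of a non-singleton component `K` is a limit of points of
`{U < H}`, and a local minimum lying in `K` lies in `{U < H}`.
On the closure of a component of `{U < H}`, which is compact by coercivity, `U` attains its
minimum inside the component; that point is a local minimum of `U`. So `{U < H}` has finitely
many components, and its closure is the union of their closures. The closure of a component is
connected and contained in `{U ≤ H}`, hence contained in `K` as soon as it meets `K`.
-/

open Topology

section ConnectedComponentIn

variable {X : Type*} [TopologicalSpace X] {S T : Set X} {x y z : X}

theorem connectedComponentIn_eq_singleton_of_eventually [T1Space X] (hx : x ∈ S)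
    (h : ∀ᶠ y in 𝓝 x, y ∈ S → y = x) : connectedComponentIn S x = {x} := by
  obtain ⟨N, hNS, hN, hxN⟩ := mem_nhds_iff.1 h
  have hKS : connectedComponentIn S x ⊆ S := connectedComponentIn_subset _ _
  have hsplit := isPreconnected_iff_subset_of_disjoint.1 isPreconnected_connectedComponentIn
    N {x}ᶜ hN isOpen_compl_singleton
    (fun y _ => (em (y = x)).imp (fun hyx : y = x => hyx ▸ hxN) id)
    (eq_empty_of_forall_notMem fun y ⟨hyK, hyN, hyx⟩ => hyx (hNS hyN (hKS hyK)))
  refine subset_antisymm (fun y hy => ?_) (singleton_subset_iff.2 (mem_connectedComponentIn hx))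
  rcases hsplit with hsub | hsub
  · exact hNS (hsub hy) (hKS hy)
  · exact absurd rfl (hsub (mem_connectedComponentIn hx))

theorem mem_connectedComponentIn_of_mem_closure (hy : y ∈ S)
    (hcl : y ∈ closure (connectedComponentIn S x)) : y ∈ connectedComponentIn S x := by
  have hpre : IsPreconnected (insert y (connectedComponentIn S x)) :=
    isPreconnected_connectedComponentIn.subset_closure (subset_insert _ _)
      (insert_subset hcl subset_closure)
  have hxS : x ∈ S := connectedComponentIn_nonempty_iff.1 (closure_nonempty_iff.1 ⟨y, hcl⟩)
  exact hpre.subset_connectedComponentIn (mem_insert_of_mem _ (mem_connectedComponentIn hxS))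
    (insert_subset hy (connectedComponentIn_subset _ _)) (mem_insert _ _)

theorem closure_connectedComponentIn_subset (hST : S ⊆ T) (hT : IsClosed T)
    (hzS : z ∈ closure (connectedComponentIn S y)) (hzT : z ∈ connectedComponentIn T x) :
    closure (connectedComponentIn S y) ⊆ connectedComponentIn T x := by
  rw [connectedComponentIn_eq hzT]
  exact isPreconnected_connectedComponentIn.closure.subset_connectedComponentIn hzS
    (closure_minimal ((connectedComponentIn_subset _ _).trans hST) hT)

end ConnectedComponentIn

section Sublevel

variable {X : Type*} [TopologicalSpace X] {f : X → ℝ} {H : ℝ} {x x₀ : X}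

theorem exists_isLocalMin_mem_connectedComponentIn_sublevel [LocallyConnectedSpace X]
    (hf : Continuous f) (hcpt : IsCompact {y | f y ≤ H}) (hx : f x < H) :
    ∃ m ∈ connectedComponentIn {y | f y < H} x, IsLocalMin f m := by
  set W := connectedComponentIn {y | f y < H} x
  have hxW : x ∈ W := mem_connectedComponentIn hx
  have hWcpt : IsCompact (closure W) :=
    hcpt.of_isClosed_subset isClosed_closure <| closure_minimal
      ((connectedComponentIn_subset _ _).trans fun _ => le_of_lt (α := ℝ))
      (isClosed_le hf continuous_const)
  obtain ⟨m, hmcl, hmin⟩ := hWcpt.exists_isMinOn ⟨x, subset_closure hxW⟩ hf.continuousOn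
  have hmW : m ∈ W :=
    mem_connectedComponentIn_of_mem_closure ((hmin (subset_closure hxW)).trans_lt hx) hmcl
  exact ⟨m, hmW, (hmin.on_subset subset_closure).isLocalMin
    ((isOpen_lt hf continuous_const).connectedComponentIn.mem_nhds hmW)⟩

theorem exists_mem_closure_connectedComponentIn_sublevel [LocallyConnectedSpace X]
    (hf : Continuous f) (hcpt : IsCompact {y | f y ≤ H}) (hmin : {m | IsLocalMin f m}.Finite)
    (hx : x ∈ closure {y | f y < H}) :
    ∃ m, f m < H ∧ x ∈ closure (connectedComponentIn {y | f y < H} m) := by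
  have hcover :
      {y | f y < H} ⊆ ⋃ m ∈ {m | IsLocalMin f m}, connectedComponentIn {y | f y < H} m :=
    fun y hy => by
      obtain ⟨m, hmW, hm⟩ := exists_isLocalMin_mem_connectedComponentIn_sublevel hf hcpt hy
      refine mem_biUnion hm ?_
      rw [← connectedComponentIn_eq hmW]
      exact mem_connectedComponentIn hy
  obtain ⟨m, -, hxm⟩ := mem_iUnion₂.1 <|
    hmin.closure_biUnion (connectedComponentIn {y | f y < H}) ▸ closure_mono hcover hx
  have hWne := closure_nonempty_iff.1 ⟨x, hxm⟩
  exact ⟨m, (connectedComponentIn_nonempty_iff (F := {y | f y < H})).1 hWne, hxm⟩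

theorem connectedComponentIn_sublevel_eq_singleton [T1Space X]
    (hmin : {m | IsLocalMin f m}.Finite) (hx : f x ≤ H) (hge : ∀ᶠ y in 𝓝 x, H ≤ f y) :
    connectedComponentIn {y | f y ≤ H} x = {x} := by
  apply connectedComponentIn_eq_singleton_of_eventually (S := {y | f y ≤ H}) hx
  have hloc : ∀ᶠ y in 𝓝 x, f y ≤ H → IsLocalMin f y :=
    hge.eventually_nhds.mono fun y hy hyH => hy.mono fun z hz => hyH.trans hz
  have hisol : ∀ᶠ y in 𝓝 x, y ∉ {m | IsLocalMin f m} \ {x} :=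
    hmin.sdiff.isClosed.isOpen_compl.mem_nhds fun h => h.2 rfl
  filter_upwards [hloc, hisol] with y hy hy' hyH
  by_contra hne
  exact hy' ⟨hy hyH, hne⟩

theorem frequently_lt_of_mem_connectedComponentIn_sublevel [T1Space X]
    (hmin : {m | IsLocalMin f m}.Finite) (hx : x ∈ connectedComponentIn {y | f y ≤ H} x₀)
    (hne : connectedComponentIn {y | f y ≤ H} x₀ ≠ {x}) : ∃ᶠ y in 𝓝 x, f y < H := by
  by_contra hge
  rw [not_frequently] at hge
  rw [connectedComponentIn_eq hx] at hne
  exact hne <| connectedComponentIn_sublevel_eq_singleton hmin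
    (connectedComponentIn_subset {y | f y ≤ H} x₀ hx) (hge.mono fun _ => le_of_not_gt)

end Sublevel

theorem isCompact_sublevel_of_tendsto_cocompact {E : Type*} [TopologicalSpace E] {f : E → ℝ}
    (hf : Continuous f) (hcoer : Tendsto f (cocompact E) atTop) (H : ℝ) :
    IsCompact {x | f x ≤ H} := by
  obtain ⟨C, hC, hCsub⟩ := mem_cocompact.1 (hcoer.eventually_gt_atTop H)
  exact hC.of_isClosed_subset (isClosed_le hf continuous_const) fun x (hx : f x ≤ H) =>
    by_contra fun hxC => (hCsub hxC : H < f x).not_ge hx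

theorem IsLocalMin.gradient_eq_zero {F : Type*} [NormedAddCommGroup F] [InnerProductSpace ℝ F]
    [CompleteSpace F] {f : F → ℝ} {x : F} (h : IsLocalMin f x) : gradient f x = 0 := by
  rw [gradient, h.fderiv_eq_zero, map_zero]

section IsCompOf

variable {d : ℕ} {U : Eucl d → ℝ} {H : ℝ} {K : Set (Eucl d)}

theorem IsCompOf.eq_sUnion_closure (hU : Continuous U) (hcpt : IsCompact {x | U x ≤ H})
    (hmin : {m | IsLocalMin U m}.Finite) (hK : IsCompOf {x | U x ≤ H} K)
    (hKns : ¬∃ x, K = {x}) :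
    K = ⋃₀ {A | ∃ W, IsCompOf {x | U x < H} W ∧ (W ∩ K).Nonempty ∧ A = closure W} := by
  obtain ⟨x₀, -, rfl⟩ := hK
  have hST : {x | U x < H} ⊆ {x | U x ≤ H} := fun _ => le_of_lt (α := ℝ)
  have hT : IsClosed {x | U x ≤ H} := isClosed_le hU continuous_const
  refine subset_antisymm (fun x hx => ?_) ?_
  · obtain ⟨m, hm, hxm⟩ := exists_mem_closure_connectedComponentIn_sublevel hU hcpt hmin
      (mem_closure_iff_frequently.2
        (frequently_lt_of_mem_connectedComponentIn_sublevel hmin hx fun h => hKns ⟨x, h⟩))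
    have hmK := closure_connectedComponentIn_subset hST hT hxm hx
      (subset_closure (mem_connectedComponentIn hm))
    exact ⟨_, ⟨_, ⟨m, hm, rfl⟩, ⟨m, mem_connectedComponentIn hm, hmK⟩, rfl⟩, hxm⟩
  · rintro x ⟨_, ⟨_, ⟨m, hm, rfl⟩, ⟨z, hzW, hzK⟩, rfl⟩, hx⟩
    exact closure_connectedComponentIn_subset hST hT (subset_closure hzW) hzK hx

theorem IsCompOf.isLocalMin_inter_eq (hU : Continuous U) (hmin : {m | IsLocalMin U m}.Finite)
    (hK : IsCompOf {x | U x ≤ H} K) (hKns : ¬∃ x, K = {x}) :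
    {m | IsLocalMin U m} ∩ K =
      {m | IsLocalMin U m} ∩ ⋃₀ {W | IsCompOf {x | U x < H} W ∧ (W ∩ K).Nonempty} := by
  obtain ⟨x₀, -, rfl⟩ := hK
  ext m
  constructor
  · rintro ⟨hm, hmK⟩
    obtain ⟨y, hy, hmy⟩ := ((frequently_lt_of_mem_connectedComponentIn_sublevel hmin hmK
      fun h => hKns ⟨m, h⟩).and_eventually hm).exists
    have hlt : U m < H := hmy.trans_lt hy
    exact ⟨hm, _, ⟨⟨m, hlt, rfl⟩, m, mem_connectedComponentIn hlt, hmK⟩,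
      mem_connectedComponentIn hlt⟩
  · rintro ⟨hm, _, ⟨⟨y, -, rfl⟩, z, hzW, hzK⟩, hmW⟩
    exact ⟨hm, closure_connectedComponentIn_subset (fun _ => le_of_lt (α := ℝ))
      (isClosed_le hU continuous_const) (subset_closure hzW) hzK (subset_closure hmW)⟩

end IsCompOf

theorem statement11_general {d : ℕ}
    (U : Eucl d → ℝ) (hU : ContDiff ℝ (⊤ : ℕ∞) U)
    (hcoer : Tendsto U (cocompact (Eucl d)) atTop)
    (hcritfin : {x : Eucl d | gradient U x = 0}.Finite)
    (H : ℝ) (K : Set (Eucl d)) (hK : IsCompOf {x | U x ≤ H} K)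
    (hKns : ¬∃ x, K = {x}) :
    K = ⋃₀ {A | ∃ W, IsCompOf {x | U x < H} W ∧ (W ∩ K).Nonempty ∧ A = closure W} ∧
      {m | IsLocalMin U m} ∩ K =
        {m | IsLocalMin U m} ∩ ⋃₀ {W | IsCompOf {x | U x < H} W ∧ (W ∩ K).Nonempty} := by
  have hcont : Continuous U := hU.continuous
  have hmin : {m | IsLocalMin U m}.Finite :=
    hcritfin.subset fun _ hm => IsLocalMin.gradient_eq_zero hm
  exact ⟨hK.eq_sUnion_closure hcont (isCompact_sublevel_of_tendsto_cocompact hcont hcoer H) hmin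
    hKns, hK.isLocalMin_inter_eq hcont hmin hKns⟩

theorem statement11 {d : ℕ} (hd : 1 ≤ d)
    (U : Eucl d → ℝ) (hU : ContDiff ℝ (⊤ : ℕ∞) U)
    (hcoer : Tendsto U (cocompact (Eucl d)) atTop)
    (hcritfin : {x : Eucl d | gradient U x = 0}.Finite)
    (hmorse : ∀ x : Eucl d, gradient U x = 0 → IsUnit (hessMat U x).det)
    (H : ℝ) (K : Set (Eucl d)) (hK : IsCompOf {x | U x ≤ H} K)
    (hKns : ¬∃ x, K = {x}) :
    K = ⋃₀ {A | ∃ W, IsCompOf {x | U x < H} W ∧ (W ∩ K).Nonempty ∧ A = closure W} ∧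
      {m | IsLocalMin U m} ∩ K =
        {m | IsLocalMin U m} ∩ ⋃₀ {W | IsCompOf {x | U x < H} W ∧ (W ∩ K).Nonempty} :=
  statement11_general U hU hcoer hcritfin H K hK hKns

end
end

section
/- Let H ∈ ℝ, let K be a connected component of {x : U(x) ≤ H} which is not a singleton, and let W and W' be two distinct connected components of {x : U(x) < H} both intersecting K. Then for every m ∈ M₀ ∩ W and every m' ∈ M₀ ∩ W', Θ(m, m') = H. -/
open Set Filter Metric
open scoped RealInnerProductSpace

noncomputable section

theorem statement12 {d : ℕ} (hd : 1 ≤ d)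
    (U : Eucl d → ℝ) (hU : ContDiff ℝ (⊤ : ℕ∞) U)
    (hcoer : Tendsto U (cocompact (Eucl d)) atTop)
    (hcritfin : {x : Eucl d | gradient U x = 0}.Finite)
    (hmorse : ∀ x : Eucl d, gradient U x = 0 → IsUnit (hessMat U x).det)
    (H : ℝ) (K : Set (Eucl d)) (hK : IsCompOf {x | U x ≤ H} K)
    (hKns : ¬∃ x, K = {x})
    (W W' : Set (Eucl d)) (hW : IsCompOf {x | U x < H} W) (hW' : IsCompOf {x | U x < H} W')
    (hWW' : W ≠ W') (hWK : (W ∩ K).Nonempty) (hW'K : (W' ∩ K).Nonempty) :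
    ∀ m, IsLocalMin U m → m ∈ W → ∀ m', IsLocalMin U m' → m' ∈ W' →
      commHeight U m m' = H := by
  have hUc : Continuous U := hU.continuous
  intro m _ hmW m' _ hm'W'
  -- basic facts about components
  obtain ⟨x₀, hx₀, hKeq⟩ := hK
  obtain ⟨w₀, hw₀, hWeq⟩ := hW
  obtain ⟨w₀', hw₀', hW'eq⟩ := hW'
  have hKconn : IsConnected K := hKeq ▸ isConnected_connectedComponentIn_iff.mpr hx₀
  have hWconn : IsConnected W := hWeq ▸ isConnected_connectedComponentIn_iff.mpr hw₀
  have hW'conn : IsConnected W' := hW'eq ▸ isConnected_connectedComponentIn_iff.mpr hw₀'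
  have hWsub : W ⊆ {x | U x < H} := hWeq ▸ connectedComponentIn_subset _ _
  have hW'sub : W' ⊆ {x | U x < H} := hW'eq ▸ connectedComponentIn_subset _ _
  have hsub : {x : Eucl d | U x < H} ⊆ {x | U x ≤ H} := fun x hx => (le_of_lt (hx : U x < H) : U x ≤ H)
  -- W ⊆ K, W' ⊆ K
  have hWK2 : W ⊆ K := by
    obtain ⟨y, hyW, hyK⟩ := hWK
    have : connectedComponentIn {x : Eucl d | U x ≤ H} y = K := by
      rw [hKeq] at hyK ⊢
      exact (connectedComponentIn_eq hyK).symm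
    rw [← this]
    exact hWconn.isPreconnected.subset_connectedComponentIn hyW (hWsub.trans hsub)
  have hW'K2 : W' ⊆ K := by
    obtain ⟨y, hyW, hyK⟩ := hW'K
    have : connectedComponentIn {x : Eucl d | U x ≤ H} y = K := by
      rw [hKeq] at hyK ⊢
      exact (connectedComponentIn_eq hyK).symm
    rw [← this]
    exact hW'conn.isPreconnected.subset_connectedComponentIn hyW (hW'sub.trans hsub)
  have hmK : m ∈ K := hWK2 hmW
  have hm'K : m' ∈ K := hW'K2 hm'W'
  have hKsub : K ⊆ {x : Eucl d | U x ≤ H} := hKeq ▸ connectedComponentIn_subset _ _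
  -- boundedness of U along paths
  have hbdd : ∀ γ : Path m m', BddAbove (Set.range fun t : unitInterval => U (γ t)) := by
    intro γ
    exact (isCompact_range ((hUc.comp γ.continuous))).bddAbove
  -- lower bound: every path must reach height ≥ H
  have hlow : ∀ γ : Path m m', H ≤ ⨆ t : unitInterval, U (γ t) := by
    intro γ
    by_contra hlt
    push_neg at hlt
    have hall : ∀ t : unitInterval, U (γ t) < H := fun t =>
      lt_of_le_of_lt (le_ciSup (hbdd γ) t) hlt
    have hrconn : IsConnected (Set.range γ) :=
      isConnected_range γ.continuous
    have hrsub : Set.range γ ⊆ {x : Eucl d | U x < H} := by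
      rintro _ ⟨t, rfl⟩; exact hall t
    have hm0 : m ∈ Set.range γ := ⟨0, γ.source⟩
    have hm1 : m' ∈ Set.range γ := ⟨1, γ.target⟩
    have h1 : Set.range γ ⊆ connectedComponentIn {x : Eucl d | U x < H} m :=
      hrconn.isPreconnected.subset_connectedComponentIn hm0 hrsub
    have hWm : connectedComponentIn {x : Eucl d | U x < H} m = W := by
      rw [hWeq] at hmW ⊢; exact (connectedComponentIn_eq hmW).symm
    have hm'W : m' ∈ W := hWm ▸ h1 hm1
    have e1 : connectedComponentIn {x : Eucl d | U x < H} w₀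
        = connectedComponentIn {x : Eucl d | U x < H} m' :=
      connectedComponentIn_eq (hWeq ▸ hm'W)
    have e2 : connectedComponentIn {x : Eucl d | U x < H} w₀'
        = connectedComponentIn {x : Eucl d | U x < H} m' :=
      connectedComponentIn_eq (hW'eq ▸ hm'W')
    exact hWW' (by rw [hWeq, hW'eq, e1, e2])
  have hbddBelow : BddBelow (Set.range fun γ : Path m m' => ⨆ t : unitInterval, U (γ t)) := by
    refine ⟨H, ?_⟩
    rintro _ ⟨γ, rfl⟩
    exact hlow γ
  haveI : Nonempty (Path m m') := ⟨PathConnectedSpace.somePath m m'⟩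
  refine le_antisymm ?_ (le_ciInf hlow)
  -- upper bound
  refine le_of_forall_pos_le_add ?_
  intro ε hε
  set V : Set (Eucl d) := {x | U x < H + ε} with hV
  have hVopen : IsOpen V := isOpen_lt hUc continuous_const
  have hKV : K ⊆ V := fun x hx => lt_of_le_of_lt (hKsub hx) (lt_add_of_pos_right H hε)
  have hmV : m ∈ V := hKV hmK
  have hKsubC : K ⊆ connectedComponentIn V m :=
    hKconn.isPreconnected.subset_connectedComponentIn hmK hKV
  have hOopen : IsOpen (connectedComponentIn V m) := hVopen.connectedComponentIn
  have hOconn : IsConnected (connectedComponentIn V m) :=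
    isConnected_connectedComponentIn_iff.mpr hmV
  have hOpath : IsPathConnected (connectedComponentIn V m) :=
    (hOopen.isConnected_iff_isPathConnected).mp hOconn
  obtain ⟨γ, hγ⟩ := hOpath.joinedIn m (hKsubC hmK) m' (hKsubC hm'K)
  have hsup : (⨆ t : unitInterval, U (γ t)) ≤ H + ε := by
    refine ciSup_le fun t => le_of_lt ?_
    exact connectedComponentIn_subset V m (hγ t)
  exact le_trans (ciInf_le hbddBelow γ) hsup

end
end
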